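/- Let m ≥ 0 and n ∈ [2^m, 2^{m+1}). Then 1/(3·2^m) ≤ v(n) ≤ 2/3 - (2 - 2^{-m})/(3n). Moreover the lower bound is attained iff n = 2^m, and the upper bound is attained iff n = 2^{m+1} - 1. -/
import Mathlib


open Finset

/-- The largest odd divisor of `k`. -/
def oddPart (k : ℕ) : ℕ := ordCompl[2] k

/-- `V n = ∑_{k=1}^n α(k)/k` as a rational number. -/
def V (n : ℕ) : ℚ := ∑ k ∈ Finset.Icc 1 n, (oddPart k : ℚ) / k

/-- `v n = V n - 2n/3`. -/
def v (n : ℕ) : ℚ := V n - 2 * n / 3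

/-- `U n = ∑_{k=1}^n α(k)`. -/
def U (n : ℕ) : ℕ := ∑ k ∈ Finset.Icc 1 n, oddPart k

/-- `G n = ∑_{k=1}^n (n+1-k)·α(k)/k` as a rational number. -/
def G (n : ℕ) : ℚ := ∑ k ∈ Finset.Icc 1 n, ((n : ℚ) + 1 - k) * (oddPart k : ℚ) / k

/-- `g n = n(n+2)/3 - G n`. -/
def g (n : ℕ) : ℚ := n * (n + 2) / 3 - G n

lemma oddPart_two_mul (k : ℕ) : oddPart (2*k) = oddPart k := by
  unfold oddPart
  rw [Nat.ordCompl_mul]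
  norm_num [Nat.Prime.factorization_self Nat.prime_two]

lemma oddPart_odd {k : ℕ} (h : Odd k) : oddPart k = k := by
  unfold oddPart
  rw [Nat.factorization_eq_zero_of_not_dvd (by have := Nat.odd_iff.mp h; omega)]
  simp

lemma V_succ (n : ℕ) : V (n+1) = V n + (oddPart (n+1) : ℚ) / ((n+1:ℕ) : ℚ) := by
  unfold V
  rw [← Finset.sum_Icc_succ_top (by omega : 1 ≤ n+1)]

lemma V_two_mul (n : ℕ) : V (2*n) = n + V n / 2 := by
  induction n with
  | zero => simp [V]
  | succ n ih =>
    have h1 : 2*(n+1) = (2*n+1)+1 := by ring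
    rw [h1, V_succ, show 2*n+1 = (2*n)+1 from rfl, V_succ, ih, V_succ]
    rw [oddPart_odd (by exact ⟨n, by ring⟩ : Odd (2*n+1))]
    have h2 : (2*n+1)+1 = 2*(n+1) := by ring
    rw [h2, oddPart_two_mul]
    have : ((2*n+1 : ℕ) : ℚ) ≠ 0 := by positivity
    push_cast
    field_simp
    ring

lemma v_two_mul (n : ℕ) : v (2*n) = v n / 2 := by
  unfold v
  rw [V_two_mul]
  push_cast
  ring

lemma v_odd (n : ℕ) : v (2*n+1) = v n / 2 + 1/3 := by
  unfold v
  rw [show (2*n+1) = (2*n)+1 from rfl, V_succ, V_two_mul,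
    oddPart_odd (⟨n, by ring⟩ : Odd (2*n+1))]
  have h : ((2*n+1 : ℕ) : ℚ) ≠ 0 := by positivity
  rw [div_self h]
  push_cast
  ring

lemma v_one : v 1 = 1/3 := by
  norm_num [v, V, oddPart]

theorem stmt7 (m n : ℕ) (h1 : 2 ^ m ≤ n) (h2 : n < 2 ^ (m + 1)) :
    (1 / (3 * 2 ^ m) ≤ v n ∧ v n ≤ 2 / 3 - (2 - ((2 : ℚ) ^ m)⁻¹) / (3 * n)) ∧
      (v n = 1 / (3 * 2 ^ m) ↔ n = 2 ^ m) ∧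
      (v n = 2 / 3 - (2 - ((2 : ℚ) ^ m)⁻¹) / (3 * n) ↔ n = 2 ^ (m + 1) - 1) := by
  induction m generalizing n with
  | zero =>
    have hn : n = 1 := by omega
    subst hn
    rw [v_one]
    norm_num
  | succ m ih =>
    simp only [pow_succ] at h1 h2 ⊢
    have hA1 : 1 ≤ 2^m := Nat.one_le_two_pow
    set c : ℚ := (2:ℚ)^m with hc
    have hc1 : (1:ℚ) ≤ c := one_le_pow₀ (by norm_num)
    have hc0 : (0:ℚ) < c := by linarith
    rcases Nat.even_or_odd n with ⟨q, rfl⟩ | ⟨q, rfl⟩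
    · -- even: n = q + q
      have hq1 : 2^m ≤ q := by omega
      have hq2 : q < 2^(m+1) := by rw [pow_succ]; omega
      obtain ⟨⟨hlow, hup⟩, hliff, huiff⟩ := ih q hq1 hq2
      simp only [pow_succ] at huiff
      have hq0 : 1 ≤ q := by omega
      have hqQ : (1:ℚ) ≤ (q:ℚ) := by exact_mod_cast hq0
      have hqne : (q:ℚ) ≠ 0 := by positivity
      have hcne : c ≠ 0 := hc0.ne'
      rw [show q + q = 2*q by ring, v_two_mul]
      push_cast
      have e1 : (1:ℚ)/(3*(c*2)) = (1/(3*c))/2 := by rw [div_div, show (3:ℚ)*c*2 = 3*(c*2) by ring]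
      have e2 : ((2:ℚ)-c⁻¹)/(3*(q:ℚ))/2 = (2-c⁻¹)/(6*q) := by rw [div_div, show (3:ℚ)*(q:ℚ)*2 = 6*q by ring]
      have e3 : ((2:ℚ)-(c*2)⁻¹)/(3*(2*(q:ℚ))) - (2-c⁻¹)/(6*q) = 1/(12*(c*q)) := by
        field_simp; ring
      have hcq1 : (1:ℚ) ≤ c*q := by nlinarith
      have h8 : (1:ℚ)/(12*(c*(q:ℚ))) ≤ 1/12 := by
        apply one_div_le_one_div_of_le <;> nlinarith
      have hub2 : v q / 2 < 2/3 - (2 - (c*2)⁻¹)/(3*(2*(q:ℚ))) := by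
        linarith [hup, e2, e3, h8]
      refine ⟨⟨?_, hub2.le⟩, ?_, ?_⟩
      · rw [e1]; linarith
      · rw [e1]
        constructor
        · intro h
          have hvq : v q = 1/(3*c) := by linarith
          have := hliff.mp hvq
          omega
        · intro h
          have hq' : q = 2^m := by omega
          have := hliff.mpr hq'
          linarith
      · constructor
        · intro h; exact absurd h (ne_of_lt hub2)
        · intro h; omega
    · -- odd: n = 2*q + 1
      have hq1 : 2^m ≤ q := by omega
      have hq2 : q < 2^(m+1) := by rw [pow_succ]; omega
      obtain ⟨⟨hlow, hup⟩, hliff, huiff⟩ := ih q hq1 hq2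
      simp only [pow_succ] at huiff
      have hq0 : 1 ≤ q := by omega
      have hqQ : (1:ℚ) ≤ (q:ℚ) := by exact_mod_cast hq0
      have hqne : (q:ℚ) ≠ 0 := by positivity
      have hcne : c ≠ 0 := hc0.ne'
      have hq2c : (q:ℚ) + 1 ≤ 2*c := by
        have h' : q + 1 ≤ 2^m*2 := by omega
        have := (Nat.cast_le (α := ℚ)).mpr h'
        push_cast at this
        rw [← hc] at this
        linarith
      rw [v_odd]
      push_cast
      have e1 : (1:ℚ)/(3*(c*2)) = (1/(3*c))/2 := by rw [div_div, show (3:ℚ)*c*2 = 3*(c*2) by ring]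
      have e2 : ((2:ℚ)-c⁻¹)/(3*(q:ℚ))/2 = (2-c⁻¹)/(6*q) := by rw [div_div, show (3:ℚ)*(q:ℚ)*2 = 6*q by ring]
      have e4 : ((2:ℚ)-c⁻¹)/(6*(q:ℚ)) - (2-(c*2)⁻¹)/(3*(2*q+1)) =
          (2*c - (q:ℚ) - 1)/(6*(c*q*(2*q+1))) := by
        field_simp; ring
      have hden : (0:ℚ) < 6*(c*(q:ℚ)*(2*q+1)) := by positivity
      have hK : (2-(c*2)⁻¹)/(3*(2*(q:ℚ)+1)) ≤ (2-c⁻¹)/(6*(q:ℚ)) := by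
        have hnum : (0:ℚ) ≤ 2*c - (q:ℚ) - 1 := by linarith
        have : (0:ℚ) ≤ (2*c - (q:ℚ) - 1)/(6*(c*q*(2*q+1))) := by positivity
        linarith [e4]
      have hlow3 : (1:ℚ)/(3*(c*2)) < v q / 2 + 1/3 := by rw [e1]; linarith
      have hvA : v q / 2 + 1/3 ≤ 2/3 - (2-c⁻¹)/(6*(q:ℚ)) := by linarith [hup, e2]
      refine ⟨⟨hlow3.le, by linarith [hK]⟩, ?_, ?_⟩
      · constructor
        · intro h; exact absurd h.symm (ne_of_lt hlow3)
        · intro h; omega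
      · constructor
        · intro h
          have hA : v q / 2 + 1/3 = 2/3 - (2-c⁻¹)/(6*(q:ℚ)) := by linarith [hK]
          have hvq : v q = 2/3 - (2-c⁻¹)/(3*(q:ℚ)) := by linarith [e2]
          have := huiff.mp hvq
          omega
        · intro h
          have hq' : q = 2^m*2 - 1 := by omega
          have hvq := huiff.mpr hq'
          have hqc : (q:ℚ) = 2*c - 1 := by
            rw [hq', Nat.cast_sub (by omega), hc]
            push_cast
            ring
          have e4' : ((2:ℚ)-c⁻¹)/(6*(q:ℚ)) - (2-(c*2)⁻¹)/(3*(2*(q:ℚ)+1)) = 0 := by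
            rw [e4, hqc]
            ring_nf
          linarith [e2, e4', hvq]
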